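/- Let S be a schema and T a graph transformation with Γ_T ⊆ Γ_S, Σ_T ⊆ Σ_S, and (T,S) ⊨ ⊤ ⊑ ⊔Γ_T. Then for all A, B ∈ Γ_T and R ∈ Σ_T±: (T,S) ⊨ A ⊑ ∃R.B (for every G ∈ L(S), every A-labeled node of T(G) has an R-successor labeled B) if and only if Q_A^T(x̄) ⊆_S ∃ȳ. Q_{A,R,B}^T(x̄,ȳ). -/

import Mathlib

namespace GDB

/-! ## Signed roles (two-way edge labels) -/

/-- A signed role: an edge label traversed forwards or backwards. -/
inductive SRole (E : Type) : Type
  | fwd (r : E)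
  | bwd (r : E)

/-- The underlying edge label of a signed role. -/
def SRole.base {E : Type} : SRole E → E
  | .fwd r => r
  | .bwd r => r

/-- The inverse of a signed role. -/
def SRole.inv {E : Type} : SRole E → SRole E
  | .fwd r => .bwd r
  | .bwd r => .fwd r

/-! ## Graphs -/

/-- A graph over node labels `N` and edge labels `E`; nodes are drawn from
the countably infinite set of node identifiers `ℕ`. -/
structure Graph (N E : Type) : Type where
  dom : Set ℕ
  nodeLab : N → Set ℕ
  edgeRel : E → Set (ℕ × ℕ)
  nodeLab_sub : ∀ A, nodeLab A ⊆ dom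
  edgeRel_dom : ∀ r u v, (u, v) ∈ edgeRel r → u ∈ dom ∧ v ∈ dom

namespace Graph

variable {N E : Type}

/-- Interpretation of a signed role. -/
def srel (G : Graph N E) : SRole E → Set (ℕ × ℕ)
  | .fwd r => G.edgeRel r
  | .bwd r => {p | (p.2, p.1) ∈ G.edgeRel r}

/-- A graph is finite if its domain is finite and all but finitely many labels
have empty interpretation. -/
def Finite (G : Graph N E) : Prop :=
  G.dom.Finite ∧ {A | G.nodeLab A ≠ ∅}.Finite ∧ {r | G.edgeRel r ≠ ∅}.Finite

/-- The `R`-successors of node `u` that carry label `B`. -/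
def succ (G : Graph N E) (R : SRole E) (B : N) (u : ℕ) : Set ℕ :=
  {v | (u, v) ∈ G.srel R ∧ v ∈ G.nodeLab B}

/-- A graph is over node labels `Γ₀` and edge labels `σ₀` if it uses no label
outside of these sets. -/
def Over (G : Graph N E) (Γ₀ : Set N) (σ₀ : Set E) : Prop :=
  (∀ A, A ∉ Γ₀ → G.nodeLab A = ∅) ∧ (∀ r, r ∉ σ₀ → G.edgeRel r = ∅)

/-- The set of (labelled) edges of a graph, as triples. -/
def edgeTriples (G : Graph N E) : Set (E × ℕ × ℕ) :=
  {t | (t.2.1, t.2.2) ∈ G.edgeRel t.1}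

/-- Undirected adjacency. -/
def Adj (G : Graph N E) (u v : ℕ) : Prop :=
  ∃ r, (u, v) ∈ G.edgeRel r ∨ (v, u) ∈ G.edgeRel r

/-- The graph is connected (as an undirected multigraph). -/
def ConnectedG (G : Graph N E) : Prop :=
  ∀ u ∈ G.dom, ∀ v ∈ G.dom, Relation.ReflTransGen G.Adj u v

/-- The graph is acyclic (as an undirected multigraph): there is no closed walk
using pairwise distinct edges. -/
def AcyclicG (G : Graph N E) : Prop :=
  ¬ ∃ (k : ℕ) (es : Fin (k + 1) → E × ℕ × ℕ) (vs : Fin (k + 2) → ℕ),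
      Function.Injective es ∧ vs 0 = vs (Fin.last (k + 1)) ∧
      ∀ i : Fin (k + 1), es i ∈ G.edgeTriples ∧
        ((es i).2 = (vs i.castSucc, vs i.succ) ∨ (es i).2 = (vs i.succ, vs i.castSucc))

/-- The degree of a node: the number of incident edges, a loop contributing 2. -/
noncomputable def degree (G : Graph N E) (u : ℕ) : ℕ :=
  {p : (E × ℕ × ℕ) × Bool |
      p.1 ∈ G.edgeTriples ∧ (if p.2 then p.1.2.1 = u else p.1.2.2 = u)}.ncard

/-- The node `u` has finitely many incident edges. -/
def FinBranching (G : Graph N E) (u : ℕ) : Prop :=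
  {t | t ∈ G.edgeTriples ∧ (t.2.1 = u ∨ t.2.2 = u)}.Finite

/-- The subgraph of `G` induced by the set `X` of nodes. -/
def induce (G : Graph N E) (X : Set ℕ) : Graph N E where
  dom := G.dom ∩ X
  nodeLab A := G.nodeLab A ∩ X
  edgeRel r := {p | p ∈ G.edgeRel r ∧ p.1 ∈ X ∧ p.2 ∈ X}
  nodeLab_sub := by
    intro A u hu
    exact ⟨G.nodeLab_sub A hu.1, hu.2⟩
  edgeRel_dom := by
    intro r u v h
    exact ⟨⟨(G.edgeRel_dom r u v h.1).1, h.2.1⟩, ⟨(G.edgeRel_dom r u v h.1).2, h.2.2⟩⟩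

/-- Expand a graph with an additional assignment of sets of nodes to node labels. -/
def expand (G : Graph N E) (ext : N → Set ℕ) : Graph N E where
  dom := G.dom
  nodeLab A := G.nodeLab A ∪ (ext A ∩ G.dom)
  edgeRel := G.edgeRel
  nodeLab_sub := by
    intro A u hu
    rcases hu with h | h
    · exact G.nodeLab_sub A h
    · exact h.2
  edgeRel_dom := G.edgeRel_dom

end Graph

/-! ## Schemas with participation constraints -/

/-- Participation constraint symbols: `?`, `1`, `+`, `*`, `0`. -/
inductive Card : Type
  | opt   -- ?
  | one   -- 1
  | plus  -- +
  | star  -- *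
  | zero  -- 0

/-- The set of cardinalities allowed by each participation constraint symbol. -/
def Card.allowed : Card → Set ℕ
  | .opt => {0, 1}
  | .one => {1}
  | .plus => {n | 1 ≤ n}
  | .star => Set.univ
  | .zero => {0}

/-- A set of successors satisfies a participation constraint. -/
def Card.ok (c : Card) (s : Set ℕ) : Prop :=
  c = Card.star ∨ (s.Finite ∧ s.ncard ∈ c.allowed)

/-- The preorder on participation constraints: containment of allowed cardinalities. -/
def Card.le (c d : Card) : Prop := c.allowed ⊆ d.allowed

/-- A schema: finite sets of allowed node and edge labels and participation
constraints. -/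
structure Schema (N E : Type) : Type where
  nlab : Finset N
  elabs : Finset E
  delta : N → SRole E → N → Card

/-- A schema is over `Γ₀` and `σ₀`: its label sets are `Γ₀` and `σ₀` (and its
participation-constraint function is trivial outside of its intended domain
`Γ₀ × σ₀± × Γ₀`, encoding a function with that restricted domain). -/
def Schema.Over {N E : Type} (S : Schema N E) (Γ₀ : Set N) (σ₀ : Set E) : Prop :=
  (↑S.nlab : Set N) = Γ₀ ∧ (↑S.elabs : Set E) = σ₀ ∧
  ∀ (A : N) (R : SRole E) (B : N),
    ¬(A ∈ Γ₀ ∧ SRole.base R ∈ σ₀ ∧ B ∈ Γ₀) → S.delta A R B = Card.star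

/-- A graph conforms to a schema: every node has exactly one label, which is
an allowed node label, every edge label is allowed, and all participation
constraints hold. -/
def Conforms {N E : Type} (G : Graph N E) (S : Schema N E) : Prop :=
  (∀ u ∈ G.dom, ∃! A, u ∈ G.nodeLab A) ∧
  (∀ A, (G.nodeLab A).Nonempty → A ∈ S.nlab) ∧
  (∀ r, (G.edgeRel r).Nonempty → r ∈ S.elabs) ∧
  (∀ A ∈ S.nlab, ∀ B ∈ S.nlab, ∀ R : SRole E, SRole.base R ∈ S.elabs →
    ∀ u ∈ G.nodeLab A, Card.ok (S.delta A R B) (G.succ R B u))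

/-- The set of finite graphs conforming to a schema. -/
def L {N E : Type} (S : Schema N E) : Set (Graph N E) :=
  {G | Graph.Finite G ∧ Conforms G S}

/-! ## ALCIF concepts and TBoxes -/

/-- ALCIF concepts. -/
inductive Concept (N E : Type) : Type
  | bot
  | atom (A : N)
  | inter (C D : Concept N E)
  | neg (C : Concept N E)
  | ex (R : SRole E) (C : Concept N E)
  | le1 (R : SRole E) (C : Concept N E)

/-- Interpretation of ALCIF concepts in a graph. -/
def Concept.interp {N E : Type} (G : Graph N E) : Concept N E → Set ℕ
  | .bot => ∅
  | .atom A => G.nodeLab A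
  | .inter C D => Concept.interp G C ∩ Concept.interp G D
  | .neg C => G.dom \ Concept.interp G C
  | .ex R C => {u | u ∈ G.dom ∧ ∃ v, (u, v) ∈ G.srel R ∧ v ∈ Concept.interp G C}
  | .le1 R C => {u | u ∈ G.dom ∧ {v | (u, v) ∈ G.srel R ∧ v ∈ Concept.interp G C}.Subsingleton}

/-- A concept inclusion. -/
abbrev CI (N E : Type) := Concept N E × Concept N E

/-- A graph satisfies a concept inclusion. -/
def SatCI {N E : Type} (G : Graph N E) (ci : CI N E) : Prop :=
  Concept.interp G ci.1 ⊆ Concept.interp G ci.2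

/-- A graph is a model of a TBox. -/
def Models {N E : Type} (G : Graph N E) (T : Set (CI N E)) : Prop :=
  ∀ ci ∈ T, SatCI G ci

/-- The TBox `T_S` corresponding to a schema `S`. -/
def schemaTBox {N E : Type} (S : Schema N E) : Set (CI N E) :=
  {ci | ∃ A ∈ S.nlab, ∃ B ∈ S.nlab, ∃ R : SRole E, SRole.base R ∈ S.elabs ∧
    (((S.delta A R B = Card.one ∨ S.delta A R B = Card.plus) ∧
        ci = (Concept.atom A, Concept.ex R (Concept.atom B))) ∨
     ((S.delta A R B = Card.one ∨ S.delta A R B = Card.opt ∨ S.delta A R B = Card.zero) ∧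
        ci = (Concept.atom A, Concept.le1 R (Concept.atom B))) ∨
     (S.delta A R B = Card.zero ∧
        ci = (Concept.atom A, Concept.neg (Concept.ex R (Concept.atom B)))))}

/-- `T̂_S`: the schema TBox together with disjointness of distinct node labels. -/
def hatTBox {N E : Type} (S : Schema N E) : Set (CI N E) :=
  schemaTBox S ∪ {ci | ∃ A ∈ S.nlab, ∃ B ∈ S.nlab, A ≠ B ∧
    ci = (Concept.inter (Concept.atom A) (Concept.atom B), Concept.bot)}

/-! ## L0 statements -/

/-- L0 statements: `A ⊑ ∃R.B`, `A ⊑ ∄R.B`, `A ⊑ ∃≤1 R.B`. -/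
inductive L0Stmt (N E : Type) : Type
  | exis (A : N) (R : SRole E) (B : N)
  | nex (A : N) (R : SRole E) (B : N)
  | le1 (A : N) (R : SRole E) (B : N)

/-- Satisfaction of an L0 statement in a graph. -/
def L0Sat {N E : Type} (G : Graph N E) : L0Stmt N E → Prop
  | .exis A R B => ∀ u ∈ G.nodeLab A, ∃ v, (u, v) ∈ G.srel R ∧ v ∈ G.nodeLab B
  | .nex A R B => ∀ u ∈ G.nodeLab A, ¬ ∃ v, (u, v) ∈ G.srel R ∧ v ∈ G.nodeLab B
  | .le1 A R B => ∀ u ∈ G.nodeLab A, (G.succ R B u).Subsingleton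

/-- An L0 statement is over node labels `Γ₀` and edge labels `σ₀`. -/
def L0Stmt.Over {N E : Type} (st : L0Stmt N E) (Γ₀ : Set N) (σ₀ : Set E) : Prop :=
  match st with
  | .exis A R B => A ∈ Γ₀ ∧ SRole.base R ∈ σ₀ ∧ B ∈ Γ₀
  | .nex A R B => A ∈ Γ₀ ∧ SRole.base R ∈ σ₀ ∧ B ∈ Γ₀
  | .le1 A R B => A ∈ Γ₀ ∧ SRole.base R ∈ σ₀ ∧ B ∈ Γ₀

/-- Coherence of an L0 TBox. -/
def Coherent {N E : Type} (T : Set (L0Stmt N E)) : Prop :=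
  (∀ (A : N) (R : SRole E) (B : N),
      ¬(L0Stmt.exis A R B ∈ T ∧ L0Stmt.nex A R B ∈ T)) ∧
  (∀ (A : N) (R : SRole E) (B : N), L0Stmt.nex A R B ∈ T → L0Stmt.le1 A R B ∈ T)

/-- The L0 TBox corresponding to a schema. -/
def schemaL0 {N E : Type} (S : Schema N E) : Set (L0Stmt N E) :=
  {st | ∃ A ∈ S.nlab, ∃ B ∈ S.nlab, ∃ R : SRole E, SRole.base R ∈ S.elabs ∧
    (((S.delta A R B = Card.one ∨ S.delta A R B = Card.plus) ∧ st = L0Stmt.exis A R B) ∨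
     ((S.delta A R B = Card.one ∨ S.delta A R B = Card.opt ∨ S.delta A R B = Card.zero) ∧
        st = L0Stmt.le1 A R B) ∨
     (S.delta A R B = Card.zero ∧ st = L0Stmt.nex A R B))}

/-! ## Two-way regular path expressions and C2RPQs -/

/-- Two-way regular path expressions. -/
inductive RE (N E : Type) : Type
  | empty
  | eps
  | atom (A : N)
  | role (R : SRole E)
  | comp (e f : RE N E)
  | plus (e f : RE N E)
  | star (e : RE N E)

/-- Semantics of a two-way regular path expression: the binary relation of
pairs of nodes connected by a witnessing path. -/
def RE.sem {N E : Type} (G : Graph N E) : RE N E → Set (ℕ × ℕ)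
  | .empty => ∅
  | .eps => {p | p.1 = p.2 ∧ p.1 ∈ G.dom}
  | .atom A => {p | p.1 = p.2 ∧ p.1 ∈ G.nodeLab A}
  | .role R => G.srel R
  | .comp e f => {p | ∃ w, (p.1, w) ∈ RE.sem G e ∧ (w, p.2) ∈ RE.sem G f}
  | .plus e f => RE.sem G e ∪ RE.sem G f
  | .star e => {p | p.1 ∈ G.dom ∧ Relation.ReflTransGen (fun a b => (a, b) ∈ RE.sem G e) p.1 p.2}

/-- The node labels occurring in a two-way regular path expression. -/
def RE.nlabels {N E : Type} : RE N E → Set N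
  | .atom A => {A}
  | .comp e f => RE.nlabels e ∪ RE.nlabels f
  | .plus e f => RE.nlabels e ∪ RE.nlabels f
  | .star e => RE.nlabels e
  | _ => ∅

/-- A C2RPQ with free variables `V`: a finite conjunction of atoms `φ(z, z')`
whose variables are either free (`V`) or among `n` existentially quantified
variables. A Boolean C2RPQ is one with `V = Empty`. -/
structure C2RPQ (N E : Type) (V : Type) : Type where
  n : ℕ
  atoms : List (RE N E × ((V ⊕ Fin n) × (V ⊕ Fin n)))

/-- The answers of a C2RPQ in a graph: assignments of nodes to the free
variables that can be extended to the existential variables so that all atoms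
are satisfied. -/
def C2RPQ.answers {N E V : Type} (q : C2RPQ N E V) (G : Graph N E) : Set (V → ℕ) :=
  {t | (∀ v, t v ∈ G.dom) ∧ ∃ s : Fin q.n → ℕ, (∀ i, s i ∈ G.dom) ∧
    ∀ a ∈ q.atoms, (Sum.elim t s a.2.1, Sum.elim t s a.2.2) ∈ RE.sem G a.1}

/-- Answers of a union of C2RPQs. -/
def UAnswers {N E V : Type} (Q : List (C2RPQ N E V)) (G : Graph N E) : Set (V → ℕ) :=
  {t | ∃ q ∈ Q, t ∈ q.answers G}

/-- A trivial atom: `∅(x,x)`, `ε(x,x)` or `A(x,x)`. -/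
def TrivialAtom {N E α : Type} (a : RE N E × α × α) : Prop :=
  a.2.1 = a.2.2 ∧ (a.1 = RE.empty ∨ a.1 = RE.eps ∨ ∃ A, a.1 = RE.atom A)

/-- Acyclicity of a C2RPQ: the multigraph on its variables with one edge per
non-trivial atom has no path of pairwise distinct edges visiting a node twice. -/
def C2RPQ.Acyclic {N E V : Type} (q : C2RPQ N E V) : Prop :=
  ¬ ∃ (k : ℕ) (es : Fin (k + 1) → Fin q.atoms.length) (vs : Fin (k + 2) → V ⊕ Fin q.n),
      Function.Injective es ∧ (∃ i j : Fin (k + 2), i ≠ j ∧ vs i = vs j) ∧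
      ∀ i : Fin (k + 1), ¬ TrivialAtom (q.atoms.get (es i)) ∧
        ((q.atoms.get (es i)).2 = (vs i.castSucc, vs i.succ) ∨
         (q.atoms.get (es i)).2 = (vs i.succ, vs i.castSucc))

/-- Adjacency of variables in the multigraph of a C2RPQ. -/
def C2RPQ.VarAdj {N E V : Type} (q : C2RPQ N E V) (x y : V ⊕ Fin q.n) : Prop :=
  ∃ a ∈ q.atoms, (a.2 = (x, y) ∨ a.2 = (y, x))

/-- Connectedness of the multigraph of a C2RPQ. -/
def C2RPQ.Connected {N E V : Type} (q : C2RPQ N E V) : Prop :=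
  ∀ x y : V ⊕ Fin q.n, Relation.ReflTransGen q.VarAdj x y

/-- A unary 2RPQ: a single-atom query of the form `∃y. φ(x,y)` or `∃y. φ(y,x)`. -/
def IsUnary2RPQ {N E : Type} (q : C2RPQ N E (Fin 1)) : Prop :=
  ∃ φ : RE N E,
    q = ⟨1, [(φ, (Sum.inl (0 : Fin 1), Sum.inr (0 : Fin 1)))]⟩ ∨
    q = ⟨1, [(φ, (Sum.inr (0 : Fin 1), Sum.inl (0 : Fin 1)))]⟩

/-- A Boolean 2RPQ: a Boolean query with a single atom. -/
def IsBoolean2RPQ {N E : Type} (q : C2RPQ N E Empty) : Prop :=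
  ∃ (φ : RE N E) (z z' : Empty ⊕ Fin q.n), q.atoms = [(φ, (z, z'))]

/-! ## The query rewriting `P̂` -/

/-- The disjunction `A₁ + ⋯ + A_n` of all node labels of a schema. -/
noncomputable def labelUnion {N E : Type} (S : Schema N E) : RE N E :=
  S.nlab.toList.foldr (fun A e => RE.plus (RE.atom A) e) RE.empty

/-- The rewriting of a two-way regular expression: insert the disjunction of
all node labels of `S` before and after every edge label, and replace labels
not in `Γ_S ∪ Σ_S±` by `∅`. -/
noncomputable def RE.hat {N E : Type} [DecidableEq N] [DecidableEq E] (S : Schema N E) : RE N E → RE N E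
  | .empty => .empty
  | .eps => .eps
  | .atom A => if A ∈ S.nlab then .atom A else .empty
  | .role R => if SRole.base R ∈ S.elabs then
      .comp (labelUnion S) (.comp (.role R) (labelUnion S)) else .empty
  | .comp e f => .comp (RE.hat S e) (RE.hat S f)
  | .plus e f => .plus (RE.hat S e) (RE.hat S f)
  | .star e => .star (RE.hat S e)

/-- The rewriting `q̂` of a C2RPQ. -/
noncomputable def C2RPQ.hat {N E V : Type} [DecidableEq N] [DecidableEq E] (S : Schema N E)
    (q : C2RPQ N E V) : C2RPQ N E V :=
  { n := q.n, atoms := q.atoms.map (fun a => (RE.hat S a.1, a.2)) }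

/-! ## Graph transformations -/

/-- A family of node constructors: for every node label `A`, an injective
function `f_A : ℕ^{k_A} → ℕ`, the ranges being pairwise disjoint. -/
structure Constructors (N : Type) : Type where
  arity : N → ℕ
  f : (A : N) → (Fin (arity A) → ℕ) → ℕ
  inj : ∀ A, Function.Injective (f A)
  disj : ∀ A B, A ≠ B → ∀ s t, f A s ≠ f B t

/-- A node rule `A(f_A(x̄)) ← q(x̄)` with acyclic body. -/
structure NodeRule (N E : Type) (F : Constructors N) : Type where
  head : N
  body : C2RPQ N E (Fin (F.arity head))
  acyc : body.Acyclic

/-- An edge rule `r(f_A(x̄), f_B(ȳ)) ← q(x̄, ȳ)` with acyclic body. -/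
structure EdgeRule (N E : Type) (F : Constructors N) : Type where
  lab : E
  src : N
  tgt : N
  body : C2RPQ N E (Fin (F.arity src) ⊕ Fin (F.arity tgt))
  acyc : body.Acyclic

/-- A graph transformation: a finite set of node and edge rules. -/
structure Transformation (N E : Type) (F : Constructors N) : Type where
  nodeRules : List (NodeRule N E F)
  edgeRules : List (EdgeRule N E F)

variable {N E : Type}

/-- The result of applying a transformation to a graph. -/
def Transformation.apply {F : Constructors N} (T : Transformation N E F)
    (G : Graph N E) : Graph N E where
  dom := {u | (∃ ρ ∈ T.nodeRules, ∃ t ∈ ρ.body.answers G, u = F.f ρ.head t) ∨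
              (∃ ρ ∈ T.edgeRules, ∃ t ∈ ρ.body.answers G,
                 u = F.f ρ.src (fun i => t (Sum.inl i)) ∨
                 u = F.f ρ.tgt (fun i => t (Sum.inr i)))}
  nodeLab A := {u | ∃ ρ ∈ T.nodeRules, ρ.head = A ∧
                  ∃ t ∈ ρ.body.answers G, u = F.f ρ.head t}
  edgeRel r := {p | ∃ ρ ∈ T.edgeRules, ρ.lab = r ∧
                  ∃ t ∈ ρ.body.answers G,
                    p.1 = F.f ρ.src (fun i => t (Sum.inl i)) ∧
                    p.2 = F.f ρ.tgt (fun i => t (Sum.inr i))}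
  nodeLab_sub := by
    rintro A u ⟨ρ, hρ, _, t, ht, rfl⟩
    exact Or.inl ⟨ρ, hρ, t, ht, rfl⟩
  edgeRel_dom := by
    rintro r u v ⟨ρ, hρ, _, t, ht, h1, h2⟩
    exact ⟨Or.inr ⟨ρ, hρ, t, ht, Or.inl h1⟩, Or.inr ⟨ρ, hρ, t, ht, Or.inr h2⟩⟩

/-- The node labels used in heads of rules of a transformation (`Γ_T`). -/
def Transformation.nlabels {F : Constructors N} (T : Transformation N E F) : Set N :=
  {A | (∃ ρ ∈ T.nodeRules, ρ.head = A) ∨ ∃ ρ ∈ T.edgeRules, ρ.src = A ∨ ρ.tgt = A}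

/-- The edge labels used in heads of rules of a transformation (`Σ_T`). -/
def Transformation.elabels {F : Constructors N} (T : Transformation N E F) : Set E :=
  {r | ∃ ρ ∈ T.edgeRules, ρ.lab = r}

/-- Answers of the union `Q_A^T` of the bodies of `A`-node rules. -/
def QAans {F : Constructors N} (T : Transformation N E F) (A : N) (G : Graph N E) :
    Set ((Fin (F.arity A)) → ℕ) :=
  {t | ∃ ρ ∈ T.nodeRules, ∃ h : ρ.head = A,
        (fun i => t (Fin.cast (congrArg F.arity h) i)) ∈ ρ.body.answers G}

/-- Answers of the union `Q_{A,R,B}^T` of the bodies of matching edge rules. -/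
def QABans {F : Constructors N} (T : Transformation N E F)
    (A : N) (R : SRole E) (B : N) (G : Graph N E) :
    Set ((Fin (F.arity A) → ℕ) × (Fin (F.arity B) → ℕ)) :=
  match R with
  | SRole.fwd r =>
      {ts | ∃ ρ ∈ T.edgeRules, ρ.lab = r ∧
        ∃ (h1 : ρ.src = A) (h2 : ρ.tgt = B),
          Sum.elim (fun i => ts.1 (Fin.cast (congrArg F.arity h1) i))
                   (fun i => ts.2 (Fin.cast (congrArg F.arity h2) i)) ∈ ρ.body.answers G}
  | SRole.bwd r =>
      {ts | ∃ ρ ∈ T.edgeRules, ρ.lab = r ∧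
        ∃ (h1 : ρ.src = B) (h2 : ρ.tgt = A),
          Sum.elim (fun i => ts.2 (Fin.cast (congrArg F.arity h1) i))
                   (fun i => ts.1 (Fin.cast (congrArg F.arity h2) i)) ∈ ρ.body.answers G}

/-- `(T,S) ⊨ ⊤ ⊑ ⊔Γ_T`: every node of every output graph carries some label in `Γ_T`. -/
def TopCovered {F : Constructors N} (T : Transformation N E F) (S : Schema N E) : Prop :=
  ∀ G ∈ L S, ∀ u ∈ (T.apply G).dom, ∃ A ∈ T.nlabels, u ∈ (T.apply G).nodeLab A

/-- A node rule is productive modulo a schema. -/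
def NodeRule.Productive {F : Constructors N} (ρ : NodeRule N E F) (S : Schema N E) : Prop :=
  ∃ G ∈ L S, (ρ.body.answers G).Nonempty

/-- An edge rule is productive modulo a schema. -/
def EdgeRule.Productive {F : Constructors N} (ρ : EdgeRule N E F) (S : Schema N E) : Prop :=
  ∃ G ∈ L S, (ρ.body.answers G).Nonempty

/-- A transformation is trimmed modulo a schema. -/
def Transformation.Trimmed {F : Constructors N} (T : Transformation N E F)
    (S : Schema N E) : Prop :=
  (∀ ρ ∈ T.nodeRules, ρ.Productive S) ∧
  (∀ ρ ∈ T.edgeRules, ρ.Productive S) ∧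
  (∀ A ∈ T.nlabels, ∃ ρ ∈ T.nodeRules, ρ.head = A) ∧
  (∀ r ∈ T.elabels, ∃ ρ ∈ T.edgeRules, ρ.lab = r)

/-- The set of all L0 statements over `Γ_T`, `Σ_T` satisfied by all outputs of `T`
on inputs conforming to `S`. -/
def elicited {F : Constructors N} (T : Transformation N E F) (S : Schema N E) :
    Set (L0Stmt N E) :=
  {st | L0Stmt.Over st T.nlabels T.elabels ∧ ∀ G ∈ L S, L0Sat (T.apply G) st}

/-! ## Horn-ALCIF -/

/-- Horn-ALCIF concept inclusions; `K`, `K'` are (possibly empty) intersections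
of concept names, represented as lists. -/
inductive HornCI (N E : Type) : Type
  | atom (K : List N) (A : N)                      -- K ⊑ A
  | bot (K : List N)                               -- K ⊑ ⊥
  | all (K : List N) (R : SRole E) (K' : List N)   -- K ⊑ ∀R.K'
  | ex (K : List N) (R : SRole E) (K' : List N)    -- K ⊑ ∃R.K'
  | nex (K : List N) (R : SRole E) (K' : List N)   -- K ⊑ ∄R.K'
  | le1 (K : List N) (R : SRole E) (K' : List N)   -- K ⊑ ∃≤1 R.K'

/-- A node satisfies an intersection of concept names. -/
def conjSat {N E : Type} (G : Graph N E) (K : List N) (u : ℕ) : Prop :=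
  u ∈ G.dom ∧ ∀ A ∈ K, u ∈ G.nodeLab A

/-- Satisfaction of a Horn-ALCIF concept inclusion in a graph. -/
def HornCI.Sat {N E : Type} (G : Graph N E) : HornCI N E → Prop
  | .atom K A => ∀ u, conjSat G K u → u ∈ G.nodeLab A
  | .bot K => ∀ u, ¬ conjSat G K u
  | .all K R K' => ∀ u, conjSat G K u → ∀ v, (u, v) ∈ G.srel R → conjSat G K' v
  | .ex K R K' => ∀ u, conjSat G K u → ∃ v, (u, v) ∈ G.srel R ∧ conjSat G K' v
  | .nex K R K' => ∀ u, conjSat G K u → ¬ ∃ v, (u, v) ∈ G.srel R ∧ conjSat G K' v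
  | .le1 K R K' => ∀ u, conjSat G K u →
      {v | (u, v) ∈ G.srel R ∧ conjSat G K' v}.Subsingleton

/-- The concept names appearing in a Horn-ALCIF concept inclusion. -/
def HornCI.nlabels {N E : Type} : HornCI N E → Set N
  | .atom K A => {B | B ∈ K} ∪ {A}
  | .bot K => {B | B ∈ K}
  | .all K _ K' => {B | B ∈ K} ∪ {B | B ∈ K'}
  | .ex K _ K' => {B | B ∈ K} ∪ {B | B ∈ K'}
  | .nex K _ K' => {B | B ∈ K} ∪ {B | B ∈ K'}
  | .le1 K _ K' => {B | B ∈ K} ∪ {B | B ∈ K'}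

/-- The roles appearing in a Horn-ALCIF concept inclusion. -/
def HornCI.roles {N E : Type} : HornCI N E → Set (SRole E)
  | .atom _ _ => ∅
  | .bot _ => ∅
  | .all _ R _ => {R}
  | .ex _ R _ => {R}
  | .nex _ R _ => {R}
  | .le1 _ R _ => {R}

/-- A graph is a model of a Horn-ALCIF TBox. -/
def HornModels {N E : Type} (G : Graph N E) (T : Set (HornCI N E)) : Prop :=
  ∀ ci ∈ T, ci.Sat G

/-- Unrestricted (finite or infinite) entailment modulo a Horn-ALCIF TBox. -/
def HornEntails {N E : Type} (T : Set (HornCI N E)) (ci : HornCI N E) : Prop :=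
  ∀ G : Graph N E, HornModels G T → ci.Sat G

/-- A finmod cycle `K₁, R₁, …, K_n` (with `K_{n} = K₁`) in a TBox. -/
def IsFinmodCycle {N E : Type} (T : Set (HornCI N E)) (n : ℕ)
    (K : Fin (n + 1) → List N) (R : Fin n → SRole E) : Prop :=
  K (Fin.last n) = K 0 ∧
  ∀ i : Fin n,
    HornEntails T (HornCI.ex (K i.castSucc) (R i) (K i.succ)) ∧
    HornEntails T (HornCI.le1 (K i.succ) (R i).inv (K i.castSucc))

/-- A TBox is closed under reversing finmod cycles. -/
def ReversalClosed {N E : Type} (T : Set (HornCI N E)) : Prop :=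
  ∀ (n : ℕ) (K : Fin (n + 1) → List N) (R : Fin n → SRole E),
    IsFinmodCycle T n K R →
    ∀ i : Fin n,
      HornCI.ex (K i.succ) (R i).inv (K i.castSucc) ∈ T ∧
      HornCI.le1 (K i.castSucc) (R i) (K i.succ) ∈ T

/-- The completion `𝒯*`: the least extension of `𝒯` closed under reversing
finmod cycles (obtained by exhaustively reversing finmod cycles). -/
def completion {N E : Type} (T : Set (HornCI N E)) : Set (HornCI N E) :=
  ⋂₀ {T' | T ⊆ T' ∧ ReversalClosed T'}

/-- A triple `(K, R, K')` is satisfiable modulo a TBox. -/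
def TripleSat {N E : Type} (T : Set (HornCI N E)) (K : List N) (R : SRole E)
    (K' : List N) : Prop :=
  ∃ G : Graph N E, HornModels G T ∧
    ∃ u u', conjSat G K u ∧ (u, u') ∈ G.srel R ∧ conjSat G K' u'

/-- A TBox is S-driven. -/
def SDriven {N E : Type} (S : Schema N E) (T : Set (HornCI N E)) : Prop :=
  (∀ K (R : SRole E) K', HornCI.ex K R K' ∈ T → TripleSat T K R K' →
    ∃ A ∈ S.nlab, ∃ A' ∈ S.nlab, A ∈ K ∧ A' ∈ K' ∧ HornCI.ex [A] R [A'] ∈ T) ∧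
  (∀ K (R : SRole E) K', HornCI.le1 K R K' ∈ T → TripleSat T K R K' →
    ∃ A ∈ S.nlab, ∃ A' ∈ S.nlab, A ∈ K ∧ A' ∈ K' ∧ HornCI.le1 [A] R [A'] ∈ T)

/-! ## Sparsity and skeleta -/

/-- Simple paths in a graph (viewed as an undirected multigraph). -/
structure GPath {N E : Type} (G : Graph N E) : Type where
  len : ℕ
  verts : Fin (len + 1) → ℕ
  edges : Fin len → E × ℕ × ℕ
  verts_mem : ∀ i, verts i ∈ G.dom
  edges_mem : ∀ i, edges i ∈ G.edgeTriples
  conn : ∀ i : Fin len,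
    (edges i).2 = (verts i.castSucc, verts i.succ) ∨
    (edges i).2 = (verts i.succ, verts i.castSucc)

/-- A path is simple: edges are pairwise distinct and no node is repeated,
except that the two endpoints may coincide (forming a cycle). -/
def GPath.Simple {N E : Type} {G : Graph N E} (p : GPath G) : Prop :=
  Function.Injective p.edges ∧
  ∀ i j : Fin (p.len + 1), p.verts i = p.verts j →
    i = j ∨ (i = 0 ∧ j = Fin.last p.len) ∨ (j = 0 ∧ i = Fin.last p.len)

/-- `u` is an endpoint of the path. -/
def GPath.IsEndpoint {N E : Type} {G : Graph N E} (p : GPath G) (u : ℕ) : Prop :=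
  p.verts 0 = u ∨ p.verts (Fin.last p.len) = u

/-- The graph is a `(k, l)`-skeleton: at most `k` distinguished nodes connected
by at most `l` simple paths, pairwise disjoint except possibly at endpoints,
covering all nodes and edges of the graph. -/
def IsSkeleton {N E : Type} (G : Graph N E) (k l : ℕ) : Prop :=
  ∃ (D : Set ℕ) (m : ℕ) (P : Fin m → GPath G),
    D ⊆ G.dom ∧ D.Finite ∧ D.ncard ≤ k ∧ m ≤ l ∧
    (∀ i, (P i).Simple) ∧
    (∀ i, (P i).verts 0 ∈ D ∧ (P i).verts (Fin.last (P i).len) ∈ D) ∧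
    (∀ i j, i ≠ j → ∀ u, u ∈ Set.range (P i).verts → u ∈ Set.range (P j).verts →
      (P i).IsEndpoint u ∧ (P j).IsEndpoint u) ∧
    (∀ u ∈ G.dom, ∃ i, u ∈ Set.range (P i).verts) ∧
    (∀ t ∈ G.edgeTriples, ∃ i a, (P i).edges a = t)

/-- An edge of `G` crossing the boundary of a set `X` of nodes. -/
def Crossing {N E : Type} (G : Graph N E) (X : Set ℕ) (t : E × ℕ × ℕ) : Prop :=
  t ∈ G.edgeTriples ∧ ((t.2.1 ∈ X ∧ t.2.2 ∉ X) ∨ (t.2.1 ∉ X ∧ t.2.2 ∈ X))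

/-- `X` carries a finitely branching tree attached to `base` by a single edge. -/
def IsAttachedTree {N E : Type} (G : Graph N E) (base X : Set ℕ) : Prop :=
  X.Nonempty ∧ X ⊆ G.dom ∧
  (G.induce X).ConnectedG ∧ (G.induce X).AcyclicG ∧
  (∀ u ∈ X, G.FinBranching u) ∧
  (∃! t : E × ℕ × ℕ, Crossing G X t) ∧
  (∀ t, Crossing G X t → (t.2.1 ∈ X → t.2.2 ∈ base) ∧ (t.2.2 ∈ X → t.2.1 ∈ base))

/-- A possibly infinite graph is `c`-sparse: it consists of a finite connected
`c`-sparse graph with finitely many finitely branching trees attached. -/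
def Graph.SparseDecomp {N E : Type} (G : Graph N E) (c : ℕ) : Prop :=
  ∃ (core : Set ℕ) (comps : Set (Set ℕ)),
    core ⊆ G.dom ∧ core.Finite ∧
    (G.induce core).ConnectedG ∧
    (G.induce core).edgeTriples.Finite ∧
    (G.induce core).edgeTriples.ncard ≤ core.ncard + c ∧
    comps.Finite ∧ ⋃₀ comps = G.dom \ core ∧
    (∀ X ∈ comps, ∀ Y ∈ comps, X ≠ Y → Disjoint X Y) ∧
    (∀ X ∈ comps, IsAttachedTree G core X)

/-! The nodes of `T(G)` labelled `A` are exactly the `f_A(t)` with `t` an answer of `Q_A^T`,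
and, since the constructors are injective with disjoint ranges, an `R`-edge from `f_A(t)`
to `f_B(s)` exists exactly when `(t, s)` answers `Q_{A,R,B}^T`. The only remaining point is
that an `R`-successor `f_B(s)` produced by an edge rule carries the label `B`, which is what
`⊤ ⊑ ⊔Γ_T` provides. -/

theorem Graph.mem_dom_of_mem_srel {G : Graph N E} {R : SRole E} {u v : ℕ}
    (h : (u, v) ∈ G.srel R) : u ∈ G.dom ∧ v ∈ G.dom := by
  cases R with
  | fwd r => exact G.edgeRel_dom r u v h
  | bwd r => exact (G.edgeRel_dom r v u h).symm

theorem Constructors.eq_of_f_eq (F : Constructors N) {A B : N}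
    {s : Fin (F.arity A) → ℕ} {t : Fin (F.arity B) → ℕ} (h : F.f A s = F.f B t) : A = B := by
  by_contra hne
  exact F.disj A B hne s t h

section Transformation

variable {F : Constructors N} (T : Transformation N E F) (G : Graph N E)

theorem Transformation.mem_apply_nodeLab_iff {A : N} {u : ℕ} :
    u ∈ (T.apply G).nodeLab A ↔ ∃ t ∈ QAans T A G, u = F.f A t := by
  constructor
  · rintro ⟨ρ, hρ, rfl, t, ht, rfl⟩
    exact ⟨t, ⟨ρ, hρ, rfl, ht⟩, rfl⟩
  · rintro ⟨t, ⟨ρ, hρ, rfl, ht⟩, rfl⟩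
    exact ⟨ρ, hρ, rfl, _, ht, rfl⟩

theorem Transformation.f_mem_apply_nodeLab_iff {A : N} {t : Fin (F.arity A) → ℕ} :
    F.f A t ∈ (T.apply G).nodeLab A ↔ t ∈ QAans T A G := by
  rw [T.mem_apply_nodeLab_iff]
  constructor
  · rintro ⟨t', ht', h⟩
    rwa [F.inj A h]
  · exact fun ht => ⟨t, ht, rfl⟩

theorem Transformation.eq_of_f_mem_apply_nodeLab {A C : N} {t : Fin (F.arity A) → ℕ}
    (h : F.f A t ∈ (T.apply G).nodeLab C) : C = A := by
  obtain ⟨t', -, h'⟩ := (T.mem_apply_nodeLab_iff G).1 h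
  exact F.eq_of_f_eq h'.symm

theorem EdgeRule.exists_answer_f_eq_iff (ρ : EdgeRule N E F) {A B : N}
    (t : Fin (F.arity A) → ℕ) (s : Fin (F.arity B) → ℕ) :
    (∃ te ∈ ρ.body.answers G, F.f A t = F.f ρ.src (fun i => te (Sum.inl i)) ∧
        F.f B s = F.f ρ.tgt (fun i => te (Sum.inr i))) ↔
      ∃ (h1 : ρ.src = A) (h2 : ρ.tgt = B),
        Sum.elim (fun i => t (Fin.cast (congrArg F.arity h1) i))
          (fun i => s (Fin.cast (congrArg F.arity h2) i)) ∈ ρ.body.answers G := by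
  obtain ⟨lab, src, tgt, body, acyc⟩ := ρ
  constructor
  · rintro ⟨te, hte, h1, h2⟩
    obtain rfl := F.eq_of_f_eq h1
    obtain rfl := F.eq_of_f_eq h2
    obtain rfl := F.inj _ h1
    obtain rfl := F.inj _ h2
    refine ⟨rfl, rfl, ?_⟩
    convert hte using 1
    funext x
    cases x <;> rfl
  · rintro ⟨rfl, rfl, h⟩
    exact ⟨_, h, rfl, rfl⟩

theorem Transformation.f_mem_apply_srel_iff {A B : N} {R : SRole E}
    {t : Fin (F.arity A) → ℕ} {s : Fin (F.arity B) → ℕ} :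
    (F.f A t, F.f B s) ∈ (T.apply G).srel R ↔ (t, s) ∈ QABans T A R B G := by
  cases R with
  | fwd r =>
    simp only [Graph.srel, Transformation.apply, QABans]
    exact exists_congr fun ρ => and_congr_right fun _ => and_congr_right fun _ =>
      ρ.exists_answer_f_eq_iff G t s
  | bwd r =>
    simp only [Graph.srel, Transformation.apply, QABans]
    exact exists_congr fun ρ => and_congr_right fun _ => and_congr_right fun _ =>
      ρ.exists_answer_f_eq_iff G s t

theorem TopCovered.f_mem_apply_nodeLab {T : Transformation N E F} {S : Schema N E}
    (htop : TopCovered T S) {G : Graph N E} (hG : G ∈ L S) {B : N}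
    {s : Fin (F.arity B) → ℕ} (h : F.f B s ∈ (T.apply G).dom) :
    F.f B s ∈ (T.apply G).nodeLab B := by
  obtain ⟨C, -, hC⟩ := htop G hG _ h
  obtain rfl := T.eq_of_f_mem_apply_nodeLab G hC
  exact hC

end Transformation

theorem entails_exists_iff_general {N E : Type} {F : Constructors N}
    (S : Schema N E) (T : Transformation N E F)
    (htop : TopCovered T S)
    (A B : N)
    (R : SRole E) :
    (∀ G ∈ L S, ∀ u ∈ (T.apply G).nodeLab A,
        ∃ v, (u, v) ∈ (T.apply G).srel R ∧ v ∈ (T.apply G).nodeLab B) ↔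
    (∀ G ∈ L S, ∀ t ∈ QAans T A G, ∃ s, (t, s) ∈ QABans T A R B G) := by
  constructor
  · intro H G hG t ht
    obtain ⟨v, hv, hvB⟩ := H G hG _ ((T.f_mem_apply_nodeLab_iff G).2 ht)
    obtain ⟨s, -, rfl⟩ := (T.mem_apply_nodeLab_iff G).1 hvB
    exact ⟨s, (T.f_mem_apply_srel_iff G).1 hv⟩
  · intro H G hG u hu
    obtain ⟨t, ht, rfl⟩ := (T.mem_apply_nodeLab_iff G).1 hu
    obtain ⟨s, hs⟩ := H G hG t ht
    have hv := (T.f_mem_apply_srel_iff G).2 hs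
    exact ⟨_, hv, htop.f_mem_apply_nodeLab hG (Graph.mem_dom_of_mem_srel hv).2⟩

/-- Under the stated hypotheses, `(T,S) ⊨ A ⊑ ∃R.B` iff
`Q_A^T(x̄) ⊆_S ∃ȳ. Q_{A,R,B}^T(x̄,ȳ)`. -/
theorem entails_exists_iff {N E : Type} {F : Constructors N}
    (S : Schema N E) (T : Transformation N E F)
    (hn : T.nlabels ⊆ (↑S.nlab : Set N)) (he : T.elabels ⊆ (↑S.elabs : Set E))
    (htop : TopCovered T S)
    (A B : N) (hA : A ∈ T.nlabels) (hB : B ∈ T.nlabels)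
    (R : SRole E) (hR : SRole.base R ∈ T.elabels) :
    (∀ G ∈ L S, ∀ u ∈ (T.apply G).nodeLab A,
        ∃ v, (u, v) ∈ (T.apply G).srel R ∧ v ∈ (T.apply G).nodeLab B) ↔
    (∀ G ∈ L S, ∀ t ∈ QAans T A G, ∃ s, (t, s) ∈ QABans T A R B G) :=
  entails_exists_iff_general S T htop A B R

end GDB
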